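/- arXiv:1412.3842 — 3 statements merged into one kernel-verified Lean document; each statement's English description precedes it below -/
import Mathlib

section
/- With D_{p̄} as defined (the set of strictly increasing (n+1)-tuples x̄ in ℕ with x₁ ≥ p₀ and xᵢ₊₁ - xᵢ ≥ pᵢ + 1 for each i), if D_{p̄} ⊆ D_{q̄₁} ∪ ⋯ ∪ D_{q̄ₗ}, then there exists some k with D_{p̄} ⊆ D_{q̄ₖ}. -/
/-!
The tuple `p̂` with gaps exactly `pᵢ + 1` lies in `D r̄` iff `r̄ ≤ p̄` coordinatewise, and `r̄ ≤ p̄`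
gives `D p̄ ⊆ D r̄`. So whichever `D q̄ₖ` of the cover contains `p̂` already contains all of `D p̄`.
-/

/-- For `p̄ = (p₀, …, pₙ)`, `D p̄` is the set of strictly increasing `(n+1)`-tuples
`x̄` of naturals with `x₀ ≥ p₀` and `xᵢ₊₁ > xᵢ + pᵢ₊₁` for each `i`. -/
def D {n : ℕ} (p : Fin (n + 1) → ℕ) : Set (Fin (n + 1) → ℕ) :=
  {x | StrictMono x ∧ p 0 ≤ x 0 ∧ ∀ i : Fin n, x i.castSucc + p i.succ < x i.succ}

/-- The tuple `p̂ = (p₀, p₀ + p₁ + 1, …)`, the coordinatewise least element of `D p`. -/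
def minPoint {n : ℕ} (p : Fin (n + 1) → ℕ) (i : Fin (n + 1)) : ℕ :=
  ∑ j ∈ Finset.Iic i, p j + i

lemma minPoint_zero {n : ℕ} (p : Fin (n + 1) → ℕ) : minPoint p 0 = p 0 := by
  rw [minPoint, ← bot_eq_zero, Finset.Iic_bot, Finset.sum_singleton, bot_eq_zero, Fin.val_zero,
    add_zero]

lemma minPoint_succ {n : ℕ} (p : Fin (n + 1) → ℕ) (i : Fin n) :
    minPoint p i.succ = minPoint p i.castSucc + p i.succ + 1 := by
  have hIic : Finset.Iic i.succ = insert i.succ (Finset.Iic i.castSucc) := by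
    ext j; simp [Fin.le_def, Fin.ext_iff]; omega
  rw [minPoint, minPoint, hIic, Finset.sum_insert (by simp), Fin.val_succ, Fin.val_castSucc]
  ring

lemma minPoint_mem_D_iff {n : ℕ} {p r : Fin (n + 1) → ℕ} :
    minPoint p ∈ D r ↔ ∀ i, r i ≤ p i := by
  simp only [D, Set.mem_ofPred_eq, minPoint_zero, minPoint_succ, Fin.strictMono_iff_lt_succ]
  constructor
  · rintro ⟨-, h0, hsucc⟩ i
    induction i using Fin.cases with
    | zero => exact h0
    | succ i => have := hsucc i; omega
  · intro hle
    exact ⟨fun i => by omega, hle 0, fun i => by have := hle i.succ; omega⟩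

lemma D_anti {n : ℕ} {p r : Fin (n + 1) → ℕ} (hle : ∀ i, r i ≤ p i) : D p ⊆ D r := by
  rintro x ⟨hmono, h0, hsucc⟩
  exact ⟨hmono, (hle 0).trans h0, fun i => by have := hsucc i; have := hle i.succ; omega⟩

/-- If `D p̄` is contained in a finite union `D q̄₁ ∪ ⋯ ∪ D q̄ₗ`, then it is contained
in a single `D q̄ₖ`. -/
theorem D_subset_finite_union (n l : ℕ) (p : Fin (n + 1) → ℕ)
    (q : Fin l → Fin (n + 1) → ℕ) (h : D p ⊆ ⋃ k : Fin l, D (q k)) :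
    ∃ k : Fin l, D p ⊆ D (q k) := by
  obtain ⟨k, hk⟩ := Set.mem_iUnion.mp (h (minPoint_mem_D_iff.mpr fun _ => le_rfl))
  exact ⟨k, D_anti (minPoint_mem_D_iff.mp hk)⟩
end

section
/- The collection of finite unions of sets of the form D_{p̄} (for p̄ ∈ ℕ^{n+1}), ordered by reverse inclusion, is a well-quasi-order: there is no infinite strictly increasing chain under inclusion and no infinite antichain under inclusion. -/
/-- The collection of finite unions of sets `D p̄`. -/
def FinUnionD (n : ℕ) : Set (Set (Fin (n + 1) → ℕ)) :=
  {S | ∃ F : Finset (Fin (n + 1) → ℕ), S = ⋃ p ∈ F, D p}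

/-!
The complement of the upward closure of a finite set `F ⊆ ℕ^k` is a finite union of boxes
`{x | ∀ i, x i < a i}` with corners `a ∈ (ℕ ∪ {∞})^k`, and one downward closed set of this
kind lies in another as soon as every corner of the first is dominated by a corner of the
second. Corners form a well-quasi-order, hence by Higman's lemma so do finite lists of
corners under domination. So in any sequence of finite sets `Fᵢ` some `Fⱼ`, `i < j`, lies
in the upward closure of `Fᵢ`, and since `p̄ ↦ D p̄` is antitone, the union over `Fⱼ` is
then contained in the union over `Fᵢ`.
-/

open Set

theorem List.SublistForall₂.exists_of_mem {α β : Type*} {R : α → β → Prop}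
    {l₁ : List α} {l₂ : List β} (h : List.SublistForall₂ R l₁ l₂) {a : α} (ha : a ∈ l₁) :
    ∃ b ∈ l₂, R a b := by
  induction h with
  | nil => simp at ha
  | @cons a₁ a₂ _ _ hr _ ih =>
    rcases List.mem_cons.1 ha with rfl | ha
    · exact ⟨a₂, List.mem_cons_self, hr⟩
    · obtain ⟨b, hb, hab⟩ := ih ha
      exact ⟨b, List.mem_cons_of_mem _ hb, hab⟩
  | cons_right _ ih =>
    obtain ⟨b, hb, hab⟩ := ih ha
    exact ⟨b, List.mem_cons_of_mem _ hb, hab⟩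

theorem wellQuasiOrdered_forall_mem_exists_le {α : Type*} [Preorder α] [WellQuasiOrderedLE α] :
    WellQuasiOrdered fun l₁ l₂ : List α => ∀ a ∈ l₁, ∃ b ∈ l₂, a ≤ b := by
  intro f
  have higman :=
    (isPWO_of_wellQuasiOrderedLE (univ : Set α)).partiallyWellOrderedOn_sublistForall₂
  obtain ⟨i, j, hij, hsub⟩ := higman.exists_lt (f := f) fun _ _ _ => mem_univ _
  exact ⟨i, j, hij, fun _ => hsub.exists_of_mem⟩

section Boxes

variable {ι : Type*}

def boxBelow (a : ι → ℕ∞) : Set (ι → ℕ) := {x | ∀ i, (x i : ℕ∞) < a i}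

theorem boxBelow_mono {a b : ι → ℕ∞} (h : a ≤ b) : boxBelow a ⊆ boxBelow b :=
  fun _ hx i => (hx i).trans_le (h i)

theorem boxBelow_update_min [DecidableEq ι] (a : ι → ℕ∞) (j : ι) (m : ℕ) :
    boxBelow (Function.update a j (min (m : ℕ∞) (a j))) = boxBelow a ∩ {x | x j < m} := by
  ext x
  simp only [boxBelow, mem_ofPred_eq, mem_inter_iff]
  constructor
  · intro hx
    have hj := hx j
    rw [Function.update_self, lt_min_iff, Nat.cast_lt] at hj
    refine ⟨fun i => ?_, hj.1⟩
    by_cases hij : i = j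
    · exact hij ▸ hj.2
    · simpa [hij] using hx i
  · rintro ⟨hx, hxj⟩ i
    by_cases hij : i = j
    · subst hij
      simpa [lt_min_iff, hxj] using hx i
    · simpa [hij] using hx i

variable [Fintype ι] [DecidableEq ι]

/-- A point avoids the upward closure of `p :: l` iff it avoids that of `l` and lies below `p`
in some coordinate `j`; so each box for `l` is split into one box per `j`, cut down by `p j`. -/
noncomputable def complCorners : List (ι → ℕ) → List (ι → ℕ∞)
  | [] => [⊤]
  | p :: l => (complCorners l).flatMap fun a =>
      Finset.univ.toList.map fun j => Function.update a j (min (p j : ℕ∞) (a j))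

theorem exists_mem_complCorners_iff (l : List (ι → ℕ)) (x : ι → ℕ) :
    (∃ a ∈ complCorners l, x ∈ boxBelow a) ↔ ∀ p ∈ l, ¬ p ≤ x := by
  induction l with
  | nil => simp [complCorners, boxBelow]
  | cons p l ih =>
    have hp : ¬ p ≤ x ↔ ∃ j, x j < p j := by simp [Pi.le_def]
    simp only [complCorners, List.mem_flatMap, List.mem_map, Finset.mem_toList,
      Finset.mem_univ, true_and, List.forall_mem_cons, hp, ← ih]
    constructor
    · rintro ⟨_, ⟨a, ha, j, rfl⟩, hx⟩
      rw [boxBelow_update_min] at hx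
      exact ⟨⟨j, hx.2⟩, a, ha, hx.1⟩
    · rintro ⟨⟨j, hj⟩, a, ha, hx⟩
      exact ⟨_, ⟨a, ha, j, rfl⟩, by rw [boxBelow_update_min]; exact ⟨hx, hj⟩⟩

theorem exists_lt_subset_upperClosure (F : ℕ → Finset (ι → ℕ)) :
    ∃ i j, i < j ∧ (F j : Set (ι → ℕ)) ⊆ upperClosure (F i : Set (ι → ℕ)) := by
  obtain ⟨i, j, hij, hdom⟩ :=
    wellQuasiOrdered_forall_mem_exists_le fun i => complCorners (F i).toList
  refine ⟨i, j, hij, fun q hq => mem_upperClosure.2 ?_⟩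
  by_contra! hq'
  obtain ⟨a, ha, hqa⟩ := (exists_mem_complCorners_iff (F i).toList q).2 (by simpa using hq')
  obtain ⟨b, hb, hab⟩ := hdom a ha
  exact (exists_mem_complCorners_iff _ q).1 ⟨b, hb, boxBelow_mono hab hqa⟩ q
    (Finset.mem_toList.2 hq) le_rfl

end Boxes

theorem D_antitone {n : ℕ} : Antitone (D (n := n)) := by
  rintro p q hpq x ⟨hx, h0, hsucc⟩
  exact ⟨hx, (hpq 0).trans h0, fun i => (Nat.add_le_add_left (hpq i.succ) _).trans_lt (hsucc i)⟩

theorem biUnion_D_subset_of_subset_upperClosure {n : ℕ} {F G : Finset (Fin (n + 1) → ℕ)}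
    (h : (G : Set (Fin (n + 1) → ℕ)) ⊆ upperClosure (F : Set (Fin (n + 1) → ℕ))) :
    ⋃ q ∈ G, D q ⊆ ⋃ p ∈ F, D p := by
  refine iUnion₂_subset fun q hq => ?_
  obtain ⟨p, hp, hpq⟩ := mem_upperClosure.1 (h hq)
  exact (D_antitone hpq).trans (subset_biUnion_of_mem (u := D) hp)

theorem FinUnionD.exists_lt_subset {n : ℕ} (f : ℕ → Set (Fin (n + 1) → ℕ))
    (hf : ∀ i, f i ∈ FinUnionD n) : ∃ i j, i < j ∧ f j ⊆ f i := by
  choose F hF using hf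
  obtain ⟨i, j, hij, hsub⟩ := exists_lt_subset_upperClosure F
  exact ⟨i, j, hij, hF i ▸ hF j ▸ biUnion_D_subset_of_subset_upperClosure hsub⟩

/-- The finite unions of sets of the form `D p̄`, ordered by reverse inclusion, form
a well-quasi-order: there is no infinite strictly increasing chain under inclusion
and no infinite antichain under inclusion. -/
theorem finUnionD_wqo (n : ℕ) :
    (¬ ∃ f : ℕ → Set (Fin (n + 1) → ℕ),
      (∀ i, f i ∈ FinUnionD n) ∧ ∀ i j : ℕ, i < j → f i ⊂ f j) ∧
    (¬ ∃ f : ℕ → Set (Fin (n + 1) → ℕ),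
      (∀ i, f i ∈ FinUnionD n) ∧ Function.Injective f ∧
        ∀ i j : ℕ, i ≠ j → ¬ f i ⊆ f j) := by
  constructor
  · rintro ⟨f, hf, hchain⟩
    obtain ⟨i, j, hij, hji⟩ := FinUnionD.exists_lt_subset f hf
    exact (hchain i j hij).not_subset hji
  · rintro ⟨f, hf, -, hanti⟩
    obtain ⟨i, j, hij, hji⟩ := FinUnionD.exists_lt_subset f hf
    exact hanti j i hij.ne' hji
end

section
/- In a structure 𝒜, suppose x̄ ≤₁ x̄′ (every existential formula true of x̄′ is true of x̄), and ȳ is a tuple such that for no single element y in ȳ is there a y′ with x̄y ≤₁ x̄′y′. Then for every tuple z̄′ there is a tuple z̄ such that x̄′z̄′ ≤₀ x̄z̄ (z̄ satisfies over x̄ all quantifier-free formulas that z̄′ satisfies over x̄′, up to the relevant Gödel-number bound) and moreover z̄ is disjoint from ȳ (shares no entries with ȳ). -/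
/-!
Call a predicate on tuples existential if it is the existential closure of a quantifier-free
formula; then `x ≤₁ x'` says exactly that every existential predicate true of `x'` is true of
`x`, and existential predicates are closed under conjunction, finite intersection, renaming of
variables and existential quantification. For each entry `z'ᵢ` and each `yⱼ`, the failure of
`x yⱼ ≤₁ x' z'ᵢ` yields an existential predicate `Eᵢⱼ` true of `x' z'ᵢ` and false of `x yⱼ`.
The predicate `∃ z, φ(v, z) ∧ ⋀ᵢⱼ Eᵢⱼ(v, zᵢ)` is existential and holds at `v = x'` with
witness `z'`, so it holds at `x`; its witness `z` satisfies `φ(x, z)`, and `zᵢ ≠ yⱼ` because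
`Eᵢⱼ(x, zᵢ)` holds while `Eᵢⱼ(x, yⱼ)` fails.
-/

open FirstOrder

/-- `x ≤₁ x'`: every finitary existential formula (an existential closure of a
quantifier-free formula) true of `x'` in the structure is true of `x`. -/
def Le1 (L : Language) (M : Type*) [L.Structure M] {n : ℕ} (x x' : Fin n → M) :
    Prop :=
  ∀ (k : ℕ) (φ : L.BoundedFormula Empty (n + k)), φ.IsQF →
    (∃ w : Fin k → M, φ.Realize (fun e => e.elim) (Fin.append x' w)) →
    ∃ w : Fin k → M, φ.Realize (fun e => e.elim) (Fin.append x w)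

theorem Fin.append_comp_finSumFinEquiv {α : Type*} {m n : ℕ} (xs : Fin m → α) (ys : Fin n → α) :
    Fin.append xs ys ∘ finSumFinEquiv = Sum.elim xs ys := by
  ext (i | j) <;> simp

theorem Fin.sumElim_comp_finSumFinEquiv_symm {α : Type*} {m n : ℕ} (xs : Fin m → α)
    (ys : Fin n → α) : Sum.elim xs ys ∘ finSumFinEquiv.symm = Fin.append xs ys := by
  rw [← Fin.append_comp_finSumFinEquiv, Function.comp_assoc, Equiv.self_comp_symm,
    Function.comp_id]

namespace FirstOrder.Language

open BoundedFormula

variable {L : Language} {M : Type*} [L.Structure M] {α : Type*}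

theorem BoundedFormula.IsQF.toFormula {n : ℕ} {φ : L.BoundedFormula α n} (h : φ.IsQF) :
    φ.toFormula.IsQF := by
  induction h with
  | falsum => exact isQF_bot
  | of_isAtomic h =>
    cases h with
    | equal t₁ t₂ => exact (IsAtomic.equal _ _).isQF
    | rel R ts => exact (IsAtomic.rel _ _).isQF
  | imp _ _ ih₁ ih₂ => exact ih₁.imp ih₂

/-- The witnesses of an existential predicate range over an arbitrary finite type `β` rather
than a `Fin k`, so that its closure properties are plain relabellings. -/
def IsExistential (L : Language) {M : Type*} [L.Structure M] {α : Type*}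
    (P : (α → M) → Prop) : Prop :=
  ∃ (β : Type) (_ : Finite β) (φ : L.Formula (α ⊕ β)), φ.IsQF ∧
    ∀ v, P v ↔ ∃ w : β → M, φ.Realize (Sum.elim v w)

namespace IsExistential

variable {P Q : (α → M) → Prop}

theorem of_iff (hP : IsExistential L P) (h : ∀ v, P v ↔ Q v) : IsExistential L Q := by
  obtain ⟨β, hβ, φ, hφ, hPφ⟩ := hP
  exact ⟨β, hβ, φ, hφ, fun v => (h v).symm.trans (hPφ v)⟩

theorem realize {φ : L.Formula α} (hφ : φ.IsQF) : IsExistential L (M := M) φ.Realize := by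
  refine ⟨Empty, inferInstance, φ.relabel Sum.inl, hφ.relabel _, fun v => ?_⟩
  simp only [Formula.realize_relabel, Sum.elim_comp_inl]
  exact ⟨fun h => ⟨Empty.elim, h⟩, fun ⟨_, h⟩ => h⟩

theorem comp {α' : Type*} (hP : IsExistential L P) (σ : α → α') :
    IsExistential L (fun v : α' → M => P (v ∘ σ)) := by
  obtain ⟨β, hβ, φ, hφ, hPφ⟩ := hP
  refine ⟨β, hβ, φ.relabel (Sum.map σ id), hφ.relabel _, fun v => ?_⟩
  simp only [hPφ, Formula.realize_relabel, Sum.elim_comp_map, Function.comp_id]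

theorem realize_boundedFormula {n : ℕ} {φ : L.BoundedFormula Empty n} (hφ : φ.IsQF) :
    IsExistential L (M := M) (φ.Realize (fun e => e.elim)) := by
  refine ((realize hφ.toFormula).comp (Sum.elim Empty.elim id)).of_iff fun v => ?_
  rw [realize_toFormula]
  exact iff_of_eq (congrArg₂ _ (funext fun e => e.elim) rfl)

theorem and (hP : IsExistential L P) (hQ : IsExistential L Q) :
    IsExistential L (fun v => P v ∧ Q v) := by
  obtain ⟨β, hβ, φ, hφ, hPφ⟩ := hP
  obtain ⟨γ, hγ, ψ, hψ, hQψ⟩ := hQ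
  refine ⟨β ⊕ γ, inferInstance, φ.relabel (Sum.map id Sum.inl) ⊓ ψ.relabel (Sum.map id Sum.inr),
    (hφ.relabel _).inf (hψ.relabel _), fun v => ?_⟩
  simp only [hPφ, hQψ, Formula.realize_inf, Formula.realize_relabel, Sum.elim_comp_map,
    Function.comp_id]
  exact ⟨fun ⟨⟨w, hw⟩, ⟨u, hu⟩⟩ => ⟨Sum.elim w u, hw, hu⟩,
    fun ⟨w, hw, hu⟩ => ⟨⟨_, hw⟩, ⟨_, hu⟩⟩⟩

theorem forall_mem {ι : Type*} {P : ι → (α → M) → Prop} (s : Finset ι)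
    (hP : ∀ i ∈ s, IsExistential L (P i)) : IsExistential L (fun v => ∀ i ∈ s, P i v) := by
  classical
  induction s using Finset.induction_on with
  | empty => exact (realize (L := L) (M := M) (φ := ⊤) IsQF.top).of_iff (by simp)
  | insert i s _ ih =>
    refine ((hP i (Finset.mem_insert_self i s)).and
      (ih fun j hj => hP j (Finset.mem_insert_of_mem hj))).of_iff fun v => ?_
    simp

theorem forall_finite {ι : Type*} [Finite ι] {P : ι → (α → M) → Prop}
    (hP : ∀ i, IsExistential L (P i)) : IsExistential L (fun v => ∀ i, P i v) := by
  have := Fintype.ofFinite ι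
  exact (forall_mem Finset.univ fun i _ => hP i).of_iff (by simp)

theorem exists_sumElim {γ : Type} [Finite γ] {P : (α ⊕ γ → M) → Prop} (hP : IsExistential L P) :
    IsExistential L (fun v : α → M => ∃ w : γ → M, P (Sum.elim v w)) := by
  obtain ⟨β, hβ, φ, hφ, hPφ⟩ := hP
  refine ⟨γ ⊕ β, inferInstance, φ.relabel (Equiv.sumAssoc α γ β), hφ.relabel _, fun v => ?_⟩
  have hassoc (w : γ ⊕ β → M) : Sum.elim v w ∘ Equiv.sumAssoc α γ β =
      Sum.elim (Sum.elim v (w ∘ Sum.inl)) (w ∘ Sum.inr) := by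
    ext ((a | c) | b) <;> rfl
  simp only [hPφ, Formula.realize_relabel, hassoc]
  exact ⟨fun ⟨w, u, h⟩ => ⟨Sum.elim w u, h⟩, fun ⟨w, h⟩ => ⟨_, _, h⟩⟩

end IsExistential

end FirstOrder.Language

open FirstOrder.Language BoundedFormula

section

variable {L : Language} {M : Type*} [L.Structure M]

theorem le1_iff_forall_isExistential {n : ℕ} {x x' : Fin n → M} :
    Le1 L M x x' ↔ ∀ P : (Fin n → M) → Prop, IsExistential L P → P x' → P x := by
  constructor
  · rintro h P ⟨β, hβ, φ, hφ, hPφ⟩ hPx'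
    obtain ⟨k, ⟨e⟩⟩ := Finite.exists_equiv_fin β
    let ψ : L.BoundedFormula Empty (n + k + 0) :=
      BoundedFormula.relabel Sum.inr (φ.relabel (finSumFinEquiv ∘ Sum.map id e))
    have hψ (u : Fin n → M) (w : Fin k → M) :
        ψ.Realize (fun e => e.elim) (Fin.append u w : Fin (n + k) → M) ↔
          φ.Realize (Sum.elim u (w ∘ e)) := by
      rw [Formula.realize_relabel_sumInr, Formula.realize_relabel, ← Function.comp_assoc,
        Fin.append_comp_finSumFinEquiv, Sum.elim_comp_map, Function.comp_id]
    rw [hPφ] at hPx' ⊢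
    obtain ⟨w', hw'⟩ := hPx'
    obtain ⟨w, hw⟩ := h k ψ ((hφ.relabel _).relabel _) ⟨w' ∘ e.symm, by
      rwa [hψ, Function.comp_assoc, e.symm_comp_self, Function.comp_id]⟩
    exact ⟨w ∘ e, (hψ x w).1 hw⟩
  · intro h k φ hφ
    refine h (fun v => ∃ w, φ.Realize (fun e => e.elim) (Fin.append v w))
      (((IsExistential.realize_boundedFormula hφ).comp finSumFinEquiv.symm).exists_sumElim.of_iff
        fun v => ?_)
    simp only [Fin.sumElim_comp_finSumFinEquiv_symm]

theorem Le1.exists_avoiding_realize {n p m : ℕ} {x x' : Fin n → M} (hx : Le1 L M x x')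
    {y : Fin p → M} (hy : ∀ (j : Fin p) (y' : M), ¬ Le1 L M (Fin.snoc x (y j)) (Fin.snoc x' y'))
    {z' : Fin m → M} {φ : L.BoundedFormula Empty (n + m)} (hφ : φ.IsQF)
    (hφz' : φ.Realize (fun e => e.elim) (Fin.append x' z')) :
    ∃ z : Fin m → M, (∀ i j, z i ≠ y j) ∧ φ.Realize (fun e => e.elim) (Fin.append x z) := by
  rw [le1_iff_forall_isExistential] at hx
  have hsep (ij : Fin m × Fin p) : ∃ E : (Fin (n + 1) → M) → Prop,
      IsExistential L E ∧ E (Fin.snoc x' (z' ij.1)) ∧ ¬ E (Fin.snoc x (y ij.2)) := by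
    simpa [le1_iff_forall_isExistential] using hy ij.2 (z' ij.1)
  choose E hE hEz' hEy using hsep
  let σ (i : Fin m) : Fin (n + 1) → Fin n ⊕ Fin m := Fin.snoc Sum.inl (Sum.inr i)
  have hP : IsExistential L fun v : Fin n → M => ∃ z : Fin m → M,
      φ.Realize (fun e => e.elim) (Fin.append v z) ∧
        ∀ ij : Fin m × Fin p, E ij (Fin.snoc v (z ij.1)) := by
    refine (((IsExistential.realize_boundedFormula hφ).comp finSumFinEquiv.symm).and
      (IsExistential.forall_finite fun ij => (hE ij).comp (σ ij.1))).exists_sumElim.of_iff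
      fun v => ?_
    simp only [Fin.sumElim_comp_finSumFinEquiv_symm, σ, Fin.comp_snoc, Sum.elim_comp_inl,
      Sum.elim_inr]
  obtain ⟨z, hφz, hEz⟩ := hx _ hP ⟨z', hφz', hEz'⟩
  exact ⟨z, fun i j hzy => hEy (i, j) (hzy ▸ hEz (i, j)), hφz⟩

end

/-- Suppose `x̄ ≤₁ x̄'`, and `ȳ` is a tuple such that for no entry `y` of `ȳ` is
there a `y'` with `x̄y ≤₁ x̄'y'`. Then for every tuple `z̄'` and every
quantifier-free formula `φ` with `φ(x̄', z̄')`, there is a tuple `z̄`, disjoint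
from `ȳ`, with `φ(x̄, z̄)`. -/
theorem le1_avoid (L : Language) (M : Type*) [L.Structure M] {n p m : ℕ}
    (x x' : Fin n → M) (hx : Le1 L M x x')
    (y : Fin p → M)
    (hy : ∀ (j : Fin p) (y' : M), ¬ Le1 L M (Fin.snoc x (y j)) (Fin.snoc x' y'))
    (z' : Fin m → M) (φ : L.BoundedFormula Empty (n + m)) (hφ : φ.IsQF) :
    ∃ z : Fin m → M, (∀ (i : Fin m) (j : Fin p), z i ≠ y j) ∧
      (φ.Realize (fun e => e.elim) (Fin.append x' z') →
        φ.Realize (fun e => e.elim) (Fin.append x z)) := by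
  by_cases hφz' : φ.Realize (fun e => e.elim) (Fin.append x' z')
  · obtain ⟨z, hzy, hφz⟩ := hx.exists_avoiding_realize hy hφ hφz'
    exact ⟨z, hzy, fun _ => hφz⟩
  · obtain ⟨z, hzy, -⟩ := hx.exists_avoiding_realize hy (z' := z') IsQF.top (by simp)
    exact ⟨z, hzy, fun h => absurd h hφz'⟩
end
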